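/- arXiv:1007.5319 — 4 statements merged into one kernel-verified Lean document; each statement's English description precedes it below -/
import Mathlib

section
/- Let n ≥ 1 and let Z' and Z'' be real symmetric n×n matrices with Z'' invertible. Define the 2n×2n block matrix 𝓛 = [[Z'' + Z'(Z'')⁻¹Z', Z'(Z'')⁻¹], [(Z'')⁻¹Z', (Z'')⁻¹]]. For any vectors F', F'' ∈ ℝⁿ, set G' = Z'F' − Z''F'' and let x = (F', −G') ∈ ℝ²ⁿ be the concatenated vector. Then xᵀ𝓛x = F'·(Z''F') + F''·(Z''F''). -/
open Matrix

section BlockQuadraticForm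

variable {m R : Type*} [Fintype m] [CommRing R]

theorem fromBlocks_mulVec_sumElim_neg_sub [DecidableEq m] {A B : Matrix m m R} (hB : IsUnit B)
    (u v : m → R) :
    fromBlocks (B + A * B⁻¹ * A) (A * B⁻¹) (B⁻¹ * A) B⁻¹ *ᵥ Sum.elim u (-(A *ᵥ u - B *ᵥ v)) =
      Sum.elim (B *ᵥ u + A *ᵥ v) v := by
  have hinv : B⁻¹ * B = 1 := nonsing_inv_mul B ((isUnit_iff_isUnit_det B).mp hB)
  have hcancel : A *ᵥ u + -(A *ᵥ u - B *ᵥ v) = B *ᵥ v := by abel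
  rw [fromBlocks_mulVec, Sum.elim_comp_inl, Sum.elim_comp_inr]
  congr 1
  · rw [add_mulVec, ← mulVec_mulVec, add_assoc, ← mulVec_add, hcancel, mulVec_mulVec, mul_assoc,
      hinv, mul_one]
  · rw [← mulVec_mulVec, ← mulVec_add, hcancel, mulVec_mulVec, hinv, one_mulVec]

theorem sumElim_neg_sub_dotProduct_sumElim {A : Matrix m m R} (hA : A.IsSymm) (B : Matrix m m R)
    (u v : m → R) :
    Sum.elim u (-(A *ᵥ u - B *ᵥ v)) ⬝ᵥ Sum.elim (B *ᵥ u + A *ᵥ v) v =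
      u ⬝ᵥ (B *ᵥ u) + v ⬝ᵥ (B *ᵥ v) := by
  have hcross : u ⬝ᵥ (A *ᵥ v) = (A *ᵥ u) ⬝ᵥ v := by
    rw [dotProduct_mulVec, ← mulVec_transpose, hA.eq]
  rw [sumElim_dotProduct_sumElim, dotProduct_add, hcross, neg_dotProduct, sub_dotProduct,
    dotProduct_comm (B *ᵥ v) v]
  ring

end BlockQuadraticForm

theorem stmt0_general (n : ℕ)
    (Z' Z'' : Matrix (Fin n) (Fin n) ℝ)
    (hZ' : Z'.IsSymm) (hZ''inv : IsUnit Z'')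
    (F' F'' : Fin n → ℝ)
    (G' : Fin n → ℝ) (hG' : G' = Z' *ᵥ F' - Z'' *ᵥ F'')
    (𝓛 : Matrix (Fin n ⊕ Fin n) (Fin n ⊕ Fin n) ℝ)
    (h𝓛 : 𝓛 = Matrix.fromBlocks
      (Z'' + Z' * (Z'')⁻¹ * Z') (Z' * (Z'')⁻¹)
      ((Z'')⁻¹ * Z') (Z'')⁻¹)
    (x : Fin n ⊕ Fin n → ℝ) (hx : x = Sum.elim F' (-G')) :
    x ⬝ᵥ (𝓛 *ᵥ x) = F' ⬝ᵥ (Z'' *ᵥ F') + F'' ⬝ᵥ (Z'' *ᵥ F'') := by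
  subst hG' h𝓛 hx
  rw [fromBlocks_mulVec_sumElim_neg_sub hZ''inv, sumElim_neg_sub_dotProduct_sumElim hZ']

/-- For real symmetric `Z'`, `Z''` with `Z''` invertible, the block matrix
`𝓛 = [[Z'' + Z'(Z'')⁻¹Z', Z'(Z'')⁻¹], [(Z'')⁻¹Z', (Z'')⁻¹]]` satisfies
`x ⬝ 𝓛 x = F'·(Z''F') + F''·(Z''F'')` where `x = (F', −G')` and `G' = Z'F' − Z''F''`. -/
theorem stmt0 (n : ℕ) (hn : 1 ≤ n)
    (Z' Z'' : Matrix (Fin n) (Fin n) ℝ)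
    (hZ' : Z'.IsSymm) (hZ'' : Z''.IsSymm) (hZ''inv : IsUnit Z'')
    (F' F'' : Fin n → ℝ)
    (G' : Fin n → ℝ) (hG' : G' = Z' *ᵥ F' - Z'' *ᵥ F'')
    (𝓛 : Matrix (Fin n ⊕ Fin n) (Fin n ⊕ Fin n) ℝ)
    (h𝓛 : 𝓛 = Matrix.fromBlocks
      (Z'' + Z' * (Z'')⁻¹ * Z') (Z' * (Z'')⁻¹)
      ((Z'')⁻¹ * Z') (Z'')⁻¹)
    (x : Fin n ⊕ Fin n → ℝ) (hx : x = Sum.elim F' (-G')) :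
    x ⬝ᵥ (𝓛 *ᵥ x) = F' ⬝ᵥ (Z'' *ᵥ F') + F'' ⬝ᵥ (Z'' *ᵥ F'') :=
  stmt0_general n Z' Z'' hZ' hZ''inv F' F'' G' hG' 𝓛 h𝓛 x hx
end

section
/- Let n ≥ 1, let Z' be a real symmetric n×n matrix and let Z'' be a real symmetric positive definite n×n matrix. Then the 2n×2n block matrix 𝓛 = [[Z'' + Z'(Z'')⁻¹Z', Z'(Z'')⁻¹], [(Z'')⁻¹Z', (Z'')⁻¹]] is symmetric positive definite. -/
/-!
With `P = [[1, 0], [Z', 1]]`, which is invertible, `𝓛 = Pᴴ * diag(Z'', Z''⁻¹) * P`: the quadratic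
form of `𝓛` at `(u, v)` is `uᵀ Z'' u + (Z' u + v)ᵀ Z''⁻¹ (Z' u + v)`. A congruence by an invertible
matrix preserves positive definiteness, and a block-diagonal matrix with positive definite blocks
is positive definite.
-/

open Matrix

namespace Matrix.PosDef

variable {m n R : Type*} [Fintype m] [Fintype n]
  [Ring R] [PartialOrder R] [StarRing R] [StarOrderedRing R]

theorem fromBlocks_zero_zero {A : Matrix m m R} {D : Matrix n n R} (hA : A.PosDef)
    (hD : D.PosDef) : (fromBlocks A 0 0 D).PosDef := by
  refine of_dotProduct_mulVec_pos (hA.isHermitian.fromBlocks (by simp) hD.isHermitian)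
    fun x hx => ?_
  obtain ⟨u, v, rfl⟩ : ∃ u v, x = Sum.elim u v :=
    ⟨x ∘ Sum.inl, x ∘ Sum.inr, (Sum.elim_comp_inl_inr x).symm⟩
  rw [fromBlocks_mulVec, Function.star_sumElim, Sum.elim_comp_inl, Sum.elim_comp_inr,
    sumElim_dotProduct_sumElim]
  simp only [zero_mulVec, add_zero, zero_add]
  rcases eq_or_ne u 0 with rfl | hu
  · have hv : v ≠ 0 := by rintro rfl; exact hx Sum.elim_zero_zero
    simpa using hD.dotProduct_mulVec_pos hv
  · exact add_pos_of_pos_of_nonneg (hA.dotProduct_mulVec_pos hu)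
      (hD.posSemidef.dotProduct_mulVec_nonneg v)

theorem fromBlocks_add_conjTranspose_mul_mul [DecidableEq m] [DecidableEq n]
    {A : Matrix m m R} {B : Matrix n n R} (hA : A.PosDef) (hB : B.PosDef) (C : Matrix n m R) :
    (fromBlocks (A + Cᴴ * B * C) (Cᴴ * B) (B * C) B).PosDef := by
  let P : Matrix (m ⊕ n) (m ⊕ n) R := fromBlocks 1 0 C 1
  have hP : Function.Injective P.mulVec := by
    refine Function.LeftInverse.injective
      (g := (fromBlocks (1 : Matrix m m R) 0 (-C) (1 : Matrix n n R)).mulVec) fun x => ?_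
    simp [P, mulVec_mulVec, fromBlocks_multiply]
  convert (hA.fromBlocks_zero_zero hB).conjTranspose_mul_mul_same hP using 1
  simp [P, fromBlocks_conjTranspose, fromBlocks_multiply, Matrix.mul_assoc]

end Matrix.PosDef

theorem stmt1_general (n : ℕ)
    (Z' Z'' : Matrix (Fin n) (Fin n) ℝ)
    (hZ' : Z'.IsSymm) (hZ'' : Z''.PosDef)
    (𝓛 : Matrix (Fin n ⊕ Fin n) (Fin n ⊕ Fin n) ℝ)
    (h𝓛 : 𝓛 = Matrix.fromBlocks
      (Z'' + Z' * (Z'')⁻¹ * Z') (Z' * (Z'')⁻¹)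
      ((Z'')⁻¹ * Z') (Z'')⁻¹) :
    𝓛.IsSymm ∧ 𝓛.PosDef := by
  have hZ'_conj : Z'ᴴ = Z' := by rw [conjTranspose_eq_transpose_of_trivial, hZ'.eq]
  have h𝓛_posDef : 𝓛.PosDef := by
    simpa only [h𝓛, hZ'_conj] using hZ''.fromBlocks_add_conjTranspose_mul_mul hZ''.inv Z'
  exact ⟨isHermitian_iff_isSymm.mp h𝓛_posDef.isHermitian, h𝓛_posDef⟩

/-- If `Z'` is real symmetric and `Z''` is real symmetric positive definite,
then the block matrix `𝓛 = [[Z'' + Z'(Z'')⁻¹Z', Z'(Z'')⁻¹], [(Z'')⁻¹Z', (Z'')⁻¹]]`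
is symmetric positive definite. -/
theorem stmt1 (n : ℕ) (hn : 1 ≤ n)
    (Z' Z'' : Matrix (Fin n) (Fin n) ℝ)
    (hZ' : Z'.IsSymm) (hZ''sym : Z''.IsSymm) (hZ'' : Z''.PosDef)
    (𝓛 : Matrix (Fin n ⊕ Fin n) (Fin n ⊕ Fin n) ℝ)
    (h𝓛 : 𝓛 = Matrix.fromBlocks
      (Z'' + Z' * (Z'')⁻¹ * Z') (Z' * (Z'')⁻¹)
      ((Z'')⁻¹ * Z') (Z'')⁻¹) :
    𝓛.IsSymm ∧ 𝓛.PosDef :=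
  stmt1_general n Z' Z'' hZ' hZ'' 𝓛 h𝓛
end

section
/- Let n ≥ 1 and let c₁, …, cₙ ∈ ℂ with Im c_j ≠ 0 for all j. Let Z' = diag(Re c₁, …, Re cₙ) and Z'' = diag(Im c₁, …, Im cₙ), and let 𝓛 be the 2n×2n block matrix [[Z'' + Z'(Z'')⁻¹Z', Z'(Z'')⁻¹], [(Z'')⁻¹Z', (Z'')⁻¹]]. Then for every λ ∈ ℝ, det(𝓛 − λI) = ∏_{j=1}^{n} ( λ² − ((1 + |c_j|²)/Im c_j)·λ + 1 ). -/
/-! All four blocks of `𝓛` are diagonal, so `𝓛` splits into the `2 × 2` matrices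
`[[b + a²/b, a/b], [a/b, 1/b]]` acting on the coordinates `(j, n + j)`, where `cⱼ = a + bi`.
Such a matrix has determinant `1` and trace `(1 + |cⱼ|²)/b`, which gives the quadratic factors. -/

open Matrix

namespace Matrix

variable {n R : Type*} [Fintype n] [DecidableEq n]

theorem det_fromBlocks_diagonal [CommRing R] (a b c d : n → R) :
    (fromBlocks (diagonal a) (diagonal b) (diagonal c) (diagonal d)).det =
      ∏ i, (a i * d i - b i * c i) := by
  -- Reindexing `n ⊕ n` by `Fin 2 × n` makes the matrix block diagonal with `2 × 2` blocks.
  let e : Fin 2 × n ≃ n ⊕ n := (finTwoEquiv.prodCongr (.refl n)).trans (Equiv.boolProdEquivSum n)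
  have hblock : (fromBlocks (diagonal a) (diagonal b) (diagonal c) (diagonal d)).submatrix e e =
      blockDiagonal fun i => !![a i, b i; c i, d i] := by
    ext ⟨k, i⟩ ⟨l, j⟩
    fin_cases k <;> fin_cases l <;> simp [e, finTwoEquiv, blockDiagonal_apply, diagonal_apply]
  rw [← det_submatrix_equiv_self e, hblock, det_blockDiagonal]
  simp [det_fin_two_of]

theorem inv_diagonal_of_ne_zero [Field R] {v : n → R} (hv : ∀ i, v i ≠ 0) :
    (diagonal v)⁻¹ = diagonal fun i => (v i)⁻¹ :=
  inv_eq_right_inv <| by simp [diagonal_mul_diagonal, hv]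

end Matrix

theorem stmt9_general (n : ℕ)
    (c : Fin n → ℂ) (hc : ∀ j, (c j).im ≠ 0)
    (Z' Z'' : Matrix (Fin n) (Fin n) ℝ)
    (hZ' : Z' = Matrix.diagonal fun j => (c j).re)
    (hZ'' : Z'' = Matrix.diagonal fun j => (c j).im)
    (𝓛 : Matrix (Fin n ⊕ Fin n) (Fin n ⊕ Fin n) ℝ)
    (h𝓛 : 𝓛 = Matrix.fromBlocks
      (Z'' + Z' * (Z'')⁻¹ * Z') (Z' * (Z'')⁻¹)
      ((Z'')⁻¹ * Z') (Z'')⁻¹) :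
    ∀ lam : ℝ,
      (𝓛 - lam • (1 : Matrix (Fin n ⊕ Fin n) (Fin n ⊕ Fin n) ℝ)).det =
        ∏ j : Fin n,
          (lam ^ 2 - ((1 + ‖c j‖ ^ 2) / (c j).im) * lam + 1) := by
  intro lam
  have hinv : (Z'')⁻¹ = diagonal fun j => ((c j).im)⁻¹ := hZ'' ▸ inv_diagonal_of_ne_zero hc
  have hblocks : 𝓛 - lam • 1 = fromBlocks
      (diagonal fun j => (c j).im + (c j).re * ((c j).im)⁻¹ * (c j).re - lam)
      (diagonal fun j => (c j).re * ((c j).im)⁻¹)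
      (diagonal fun j => ((c j).im)⁻¹ * (c j).re)
      (diagonal fun j => ((c j).im)⁻¹ - lam) := by
    rw [h𝓛, hinv, hZ', hZ'', ← fromBlocks_one, fromBlocks_smul, sub_eq_add_neg, fromBlocks_neg,
      fromBlocks_add]
    simp [diagonal_mul_diagonal, smul_one_eq_diagonal, sub_eq_add_neg]
  rw [hblocks, det_fromBlocks_diagonal]
  refine Finset.prod_congr rfl fun j _ => ?_
  rw [Complex.sq_norm, Complex.normSq_apply]
  field_simp [hc j]
  ring

/-- For diagonal `Z = diag(c₁,…,cₙ)` with `Im cⱼ ≠ 0`, the characteristic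
polynomial of the block matrix `𝓛` factors as
`det(𝓛 − λI) = ∏ⱼ (λ² − ((1 + |cⱼ|²)/Im cⱼ) λ + 1)`. -/
theorem stmt9 (n : ℕ) (hn : 1 ≤ n)
    (c : Fin n → ℂ) (hc : ∀ j, (c j).im ≠ 0)
    (Z' Z'' : Matrix (Fin n) (Fin n) ℝ)
    (hZ' : Z' = Matrix.diagonal fun j => (c j).re)
    (hZ'' : Z'' = Matrix.diagonal fun j => (c j).im)
    (𝓛 : Matrix (Fin n ⊕ Fin n) (Fin n ⊕ Fin n) ℝ)
    (h𝓛 : 𝓛 = Matrix.fromBlocks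
      (Z'' + Z' * (Z'')⁻¹ * Z') (Z' * (Z'')⁻¹)
      ((Z'')⁻¹ * Z') (Z'')⁻¹) :
    ∀ lam : ℝ,
      (𝓛 - lam • (1 : Matrix (Fin n ⊕ Fin n) (Fin n ⊕ Fin n) ℝ)).det =
        ∏ j : Fin n,
          (lam ^ 2 - ((1 + ‖c j‖ ^ 2) / (c j).im) * lam + 1) :=
  stmt9_general n c hc Z' Z'' hZ' hZ'' 𝓛 h𝓛
end

section
/- Let n ≥ 1 and let c₁, …, cₙ ∈ ℂ with Re c_j ≠ 0 and Im c_j ≠ 0 for all j. Let Z' = diag(Re c₁, …, Re cₙ), Z'' = diag(Im c₁, …, Im cₙ), and let 𝓛 be the 2n×2n block matrix [[Z'' + Z'(Z'')⁻¹Z', Z'(Z'')⁻¹], [(Z'')⁻¹Z', (Z'')⁻¹]]. For each j set a_j = 1/Re c_j + (Im c_j)²/Re c_j + Re c_j and b_j = 2·Im c_j/Re c_j. Then a_j² − b_j² ≥ 0 for every j, and a real number λ is an eigenvalue of 𝓛 if and only if λ = (−a_j + √(a_j² − b_j²))/(−b_j) or λ = (−a_j − √(a_j² − b_j²))/(−b_j)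 for some j. -/
open Matrix

/-!
Since `Z'` and `Z''` are diagonal, `𝓛` is a 2 × 2 block matrix with diagonal blocks, so after
interleaving the coordinates it is block diagonal with the 2 × 2 blocks
`[[y + x²/y, x/y], [x/y, 1/y]]`, where `x = Re cⱼ`, `y = Im cⱼ`. Hence `λ` is an eigenvalue iff
`det (λ - block j) = 0` for some `j`, and multiplying that quadratic by `bⱼ = 2y/x` turns it into
the palindromic quadratic `bⱼ λ² - 2 aⱼ λ + bⱼ`, whose discriminant is
`4 (aⱼ² - bⱼ²) = 4 ((y - 1)² + x²) ((y + 1)² + x²) / x² ≥ 0`.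
-/

def Equiv.finTwoProdEquivSum (α : Type*) : Fin 2 × α ≃ α ⊕ α :=
  (finTwoEquiv.prodCongr (Equiv.refl α)).trans (Equiv.boolProdEquivSum α)

namespace Matrix

variable {ι R : Type*} [DecidableEq ι]

theorem fromBlocks_diagonal_eq_submatrix_blockDiagonal [Zero R] (p q r s : ι → R) :
    fromBlocks (diagonal p) (diagonal q) (diagonal r) (diagonal s) =
      (blockDiagonal fun i => !![p i, q i; r i, s i]).submatrix
        (Equiv.finTwoProdEquivSum ι).symm (Equiv.finTwoProdEquivSum ι).symm := by
  ext (i | i) (j | j) <;> by_cases h : i = j <;>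
    simp [h, Equiv.finTwoProdEquivSum, blockDiagonal_apply, finTwoEquiv]

theorem det_fromBlocks_diagonal_s10 [Fintype ι] [CommRing R] (p q r s : ι → R) :
    (fromBlocks (diagonal p) (diagonal q) (diagonal r) (diagonal s)).det =
      ∏ i, (p i * s i - q i * r i) := by
  simp only [fromBlocks_diagonal_eq_submatrix_blockDiagonal, det_submatrix_equiv_self,
    det_blockDiagonal, det_fin_two_of]

theorem mem_spectrum_fromBlocks_diagonal_iff [Fintype ι] {K : Type*} [Field K]
    (p q r s : ι → K) (lam : K) :
    lam ∈ spectrum K (fromBlocks (diagonal p) (diagonal q) (diagonal r) (diagonal s)) ↔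
      ∃ i, (lam - p i) * (lam - s i) - q i * r i = 0 := by
  have hsub : algebraMap K _ lam - fromBlocks (diagonal p) (diagonal q) (diagonal r) (diagonal s) =
      fromBlocks (diagonal fun i => lam - p i) (diagonal (-q)) (diagonal (-r))
        (diagonal fun i => lam - s i) := by
    ext (i | i) (j | j) <;> by_cases h : i = j <;> simp [h, algebraMap_eq_diagonal]
  simp [spectrum.mem_iff, hsub, isUnit_iff_isUnit_det, det_fromBlocks_diagonal_s10,
    Finset.prod_eq_zero_iff]

end Matrix

theorem palindromic_quadratic_eq_zero_iff {a b x : ℝ} (hb : b ≠ 0) (hab : 0 ≤ a ^ 2 - b ^ 2) :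
    b * x ^ 2 - 2 * a * x + b = 0 ↔
      x = (-a + √(a ^ 2 - b ^ 2)) / -b ∨ x = (-a - √(a ^ 2 - b ^ 2)) / -b := by
  have hdisc : discrim (-b) (2 * a) (-b) = (2 * √(a ^ 2 - b ^ 2)) * (2 * √(a ^ 2 - b ^ 2)) := by
    rw [discrim, mul_mul_mul_comm, Real.mul_self_sqrt hab]; ring
  have halve (t : ℝ) : (-(2 * a) + 2 * t) / (2 * -b) = (-a + t) / -b := by
    rw [show -(2 * a) + 2 * t = 2 * (-a + t) by ring, mul_div_mul_left _ _ two_ne_zero]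
  have halve' (t : ℝ) : (-(2 * a) - 2 * t) / (2 * -b) = (-a - t) / -b := by
    rw [show -(2 * a) - 2 * t = 2 * (-a - t) by ring, mul_div_mul_left _ _ two_ne_zero]
  calc b * x ^ 2 - 2 * a * x + b = 0 ↔ -b * (x * x) + 2 * a * x + -b = 0 := by
        constructor <;> intro h <;> linear_combination -h
    _ ↔ _ := quadratic_eq_zero_iff (neg_ne_zero.2 hb) hdisc x
    _ ↔ _ := by rw [halve, halve']

theorem palindromic_coeffs_sq_sub_sq_nonneg {x y : ℝ} (hx : x ≠ 0) :
    0 ≤ (1 / x + y ^ 2 / x + x) ^ 2 - (2 * y / x) ^ 2 := by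
  have h : (1 / x + y ^ 2 / x + x) ^ 2 - (2 * y / x) ^ 2 =
      ((y - 1) ^ 2 + x ^ 2) * ((y + 1) ^ 2 + x ^ 2) / x ^ 2 := by
    field_simp; ring
  rw [h]; positivity

theorem eigenvalue_equation_iff_palindromic_quadratic {x y lam : ℝ} (hx : x ≠ 0)
    (hy : y ≠ 0) :
    (lam - (y + x * y⁻¹ * x)) * (lam - y⁻¹) - x * y⁻¹ * (y⁻¹ * x) = 0 ↔
      2 * y / x * lam ^ 2 - 2 * (1 / x + y ^ 2 / x + x) * lam + 2 * y / x = 0 := by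
  have h : 2 * y / x * lam ^ 2 - 2 * (1 / x + y ^ 2 / x + x) * lam + 2 * y / x =
      2 * y / x * ((lam - (y + x * y⁻¹ * x)) * (lam - y⁻¹) - x * y⁻¹ * (y⁻¹ * x)) := by
    field_simp; ring
  rw [h, mul_eq_zero, or_iff_right (by positivity)]

theorem stmt10_general (n : ℕ)
    (c : Fin n → ℂ) (hcre : ∀ j, (c j).re ≠ 0) (hcim : ∀ j, (c j).im ≠ 0)
    (Z' Z'' : Matrix (Fin n) (Fin n) ℝ)
    (hZ' : Z' = Matrix.diagonal fun j => (c j).re)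
    (hZ'' : Z'' = Matrix.diagonal fun j => (c j).im)
    (𝓛 : Matrix (Fin n ⊕ Fin n) (Fin n ⊕ Fin n) ℝ)
    (h𝓛 : 𝓛 = Matrix.fromBlocks
      (Z'' + Z' * (Z'')⁻¹ * Z') (Z' * (Z'')⁻¹)
      ((Z'')⁻¹ * Z') (Z'')⁻¹)
    (a b : Fin n → ℝ)
    (ha : ∀ j, a j = 1 / (c j).re + (c j).im ^ 2 / (c j).re + (c j).re)
    (hb : ∀ j, b j = 2 * (c j).im / (c j).re) :
    (∀ j, 0 ≤ a j ^ 2 - b j ^ 2) ∧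
      ∀ lam : ℝ, lam ∈ spectrum ℝ 𝓛 ↔
        ∃ j, lam = (-(a j) + Real.sqrt (a j ^ 2 - b j ^ 2)) / (-(b j)) ∨
          lam = (-(a j) - Real.sqrt (a j ^ 2 - b j ^ 2)) / (-(b j)) := by
  have hab (j : Fin n) : 0 ≤ a j ^ 2 - b j ^ 2 :=
    ha j ▸ hb j ▸ palindromic_coeffs_sq_sub_sq_nonneg (hcre j)
  have hb0 (j : Fin n) : b j ≠ 0 := hb j ▸ by have := hcre j; have := hcim j; positivity
  have hinv : (Z'')⁻¹ = diagonal fun j => (c j).im⁻¹ :=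
    hZ'' ▸ inv_eq_right_inv (by simp [diagonal_mul_diagonal, hcim])
  have h𝓛_diag : 𝓛 =
      fromBlocks (diagonal fun j => (c j).im + (c j).re * (c j).im⁻¹ * (c j).re)
        (diagonal fun j => (c j).re * (c j).im⁻¹) (diagonal fun j => (c j).im⁻¹ * (c j).re)
        (diagonal fun j => (c j).im⁻¹) := by
    rw [h𝓛, hinv, hZ', hZ'']
    simp only [diagonal_mul_diagonal, diagonal_add]
  refine ⟨hab, fun lam => ?_⟩
  rw [h𝓛_diag, mem_spectrum_fromBlocks_diagonal_iff]
  refine exists_congr fun j => ?_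
  rw [eigenvalue_equation_iff_palindromic_quadratic (hcre j) (hcim j), ← ha j, ← hb j]
  exact palindromic_quadratic_eq_zero_iff (hb0 j) (hab j)

/-- For diagonal `Z = diag(c₁,…,cₙ)` with `Re cⱼ ≠ 0` and `Im cⱼ ≠ 0`,
setting `aⱼ = 1/Re cⱼ + (Im cⱼ)²/Re cⱼ + Re cⱼ` and `bⱼ = 2 Im cⱼ / Re cⱼ`, one has
`aⱼ² − bⱼ² ≥ 0`, and `λ` is an eigenvalue of the block matrix `𝓛` iff
`λ = (−aⱼ ± √(aⱼ² − bⱼ²)) / (−bⱼ)` for some `j`. -/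
theorem stmt10 (n : ℕ) (hn : 1 ≤ n)
    (c : Fin n → ℂ) (hcre : ∀ j, (c j).re ≠ 0) (hcim : ∀ j, (c j).im ≠ 0)
    (Z' Z'' : Matrix (Fin n) (Fin n) ℝ)
    (hZ' : Z' = Matrix.diagonal fun j => (c j).re)
    (hZ'' : Z'' = Matrix.diagonal fun j => (c j).im)
    (𝓛 : Matrix (Fin n ⊕ Fin n) (Fin n ⊕ Fin n) ℝ)
    (h𝓛 : 𝓛 = Matrix.fromBlocks
      (Z'' + Z' * (Z'')⁻¹ * Z') (Z' * (Z'')⁻¹)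
      ((Z'')⁻¹ * Z') (Z'')⁻¹)
    (a b : Fin n → ℝ)
    (ha : ∀ j, a j = 1 / (c j).re + (c j).im ^ 2 / (c j).re + (c j).re)
    (hb : ∀ j, b j = 2 * (c j).im / (c j).re) :
    (∀ j, 0 ≤ a j ^ 2 - b j ^ 2) ∧
      ∀ lam : ℝ, lam ∈ spectrum ℝ 𝓛 ↔
        ∃ j, lam = (-(a j) + Real.sqrt (a j ^ 2 - b j ^ 2)) / (-(b j)) ∨
          lam = (-(a j) - Real.sqrt (a j ^ 2 - b j ^ 2)) / (-(b j)) :=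
  stmt10_general n c hcre hcim Z' Z'' hZ' hZ'' 𝓛 h𝓛 a b ha hb
end
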